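/- arXiv:2306.17065 — 3 statements merged into one kernel-verified Lean document; each statement's English description precedes it below -/
import Mathlib

section
/- Let H be a hereditary and union-closed class of graphs. Let G be a graph, let X be an H-deletion set in G, and let Z ⊆ V(G) be a weakly (H,ℓ)-separable set. Suppose there exists a subset X' ⊆ X of size 2ℓ+1 such that λ_G(Z,X') = 2ℓ+1. Then X' is redundant in X. -/
/-! Common definitions: rooted trees, graph classes, tree H-decompositions,
H-treewidth, separators, separations, (H,ℓ)-separations, deletion sets. -/

/-- A (finite) rooted tree, encoded by a finite node type together with a parent
function under which every node eventually reaches the root. -/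
structure RTree : Type 1 where
  ι : Type
  fin : Fintype ι
  root : ι
  parent : ι → ι
  parent_root : parent root = root
  wf : ∀ t : ι, ∃ n : ℕ, parent^[n] t = root

/-- The undirected graph underlying a rooted tree. -/
def RTree.graph (T : RTree) : SimpleGraph T.ι where
  Adj s t := s ≠ t ∧ (T.parent s = t ∨ T.parent t = s)
  symm := ⟨fun _ _ h => ⟨Ne.symm h.1, h.2.symm⟩⟩
  loopless := ⟨fun _ h => h.1 rfl⟩

/-- A leaf of a rooted tree: a node with no children. -/
def RTree.IsLeaf (T : RTree) (t : T.ι) : Prop :=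
  ∀ u : T.ι, T.parent u = t → u = t

/-- A class of (simple) graphs. -/
abbrev GraphClass : Type 1 := ∀ {α : Type}, SimpleGraph α → Prop

/-- A graph class is hereditary if it is closed under (isomorphic copies of)
induced subgraphs, i.e. closed under graph embeddings. -/
def Hereditary (H : GraphClass) : Prop :=
  ∀ {α β : Type} (G : SimpleGraph α) (G' : SimpleGraph β), H G → (G' ↪g G) → H G'

/-- A graph class is union-closed if it is closed under disjoint unions. -/
def UnionClosed (H : GraphClass) : Prop :=
  ∀ {α β : Type} (G₁ : SimpleGraph α) (G₂ : SimpleGraph β),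
    H G₁ → H G₂ → H (G₁ ⊕g G₂)

/-- The graph class `H` contains the graph with no vertices. -/
def ContainsNullGraph (H : GraphClass) : Prop :=
  ∀ (α : Type), IsEmpty α → ∀ G : SimpleGraph α, H G

variable {V : Type}

/-- `X` is an `H`-deletion set in `G` if `G - X` belongs to `H`. -/
def IsDeletionSet (H : GraphClass) (G : SimpleGraph V) (X : Set V) : Prop :=
  H (G.induce Xᶜ)

/-- `P` is an `(X,Y)`-separator in `G`: every walk from a vertex of `X` to a
vertex of `Y` contains a vertex of `P` (`P` may intersect `X ∪ Y`). -/
def IsSeparator (G : SimpleGraph V) (X Y P : Set V) : Prop :=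
  ∀ ⦃x y : V⦄, x ∈ X → y ∈ Y → ∀ p : G.Walk x y, ∃ v ∈ p.support, v ∈ P

/-- `λ_G(X,Y)`: the minimum size of an `(X,Y)`-separator in `G`. -/
noncomputable def lam (G : SimpleGraph V) (X Y : Set V) : ℕ :=
  sInf {n : ℕ | ∃ P : Set V, IsSeparator G X Y P ∧ P.ncard = n}

/-- `(A,B)` is a separation of `G`: `A ∪ B = V(G)` and there is no edge
between `A \ B` and `B \ A`. -/
def IsSeparation (G : SimpleGraph V) (A B : Set V) : Prop :=
  A ∪ B = Set.univ ∧ ∀ a ∈ A \ B, ∀ b ∈ B \ A, ¬ G.Adj a b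

/-- `(C,S)` is an `(H,ℓ)`-separation in `G`: `C` and `S` are disjoint,
`G[C] ∈ H`, `|S| ≤ ℓ` and `N_G(C) ⊆ S`. -/
def IsHSeparation (H : GraphClass) (G : SimpleGraph V) (ℓ : ℕ) (C S : Set V) : Prop :=
  Disjoint C S ∧ H (G.induce C) ∧ S.ncard ≤ ℓ ∧
    ∀ v ∈ C, ∀ u : V, G.Adj v u → u ∉ C → u ∈ S

/-- The separation `(C,S)` weakly covers `Z` if `Z ⊆ C ∪ S`. -/
def WeaklyCovers (C S Z : Set V) : Prop := Z ⊆ C ∪ S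

/-- `Z` is weakly `(H,ℓ)`-separable if some `(H,ℓ)`-separation weakly covers it. -/
def WeaklySeparable (H : GraphClass) (G : SimpleGraph V) (ℓ : ℕ) (Z : Set V) : Prop :=
  ∃ C S : Set V, IsHSeparation H G ℓ C S ∧ WeaklyCovers C S Z

/-- A subset `X'` of an `H`-deletion set `X` is redundant in `X` if it can be
replaced by a strictly smaller set. -/
def Redundant (H : GraphClass) (G : SimpleGraph V) (X X' : Set V) : Prop :=
  ∃ X'' : Set V, X''.ncard < X'.ncard ∧ IsDeletionSet H G ((X \ X') ∪ X'')

/-- The data `(T, χ, L)` of a candidate tree `H`-decomposition. -/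
structure PreDecomp (V : Type) : Type 1 where
  T : RTree
  χ : T.ι → Set V
  L : Set V

/-- `D = (T,χ,L)` is a tree `H`-decomposition of the subgraph of `G` induced by `W`:
(0) all bags and `L` are contained in `W`;
(1) for each `v ∈ W` the nodes whose bag contains `v` form a nonempty connected subtree;
(2) every edge of `G[W]` is contained in some bag;
(3) every `v ∈ L` is in a unique bag, which is at a leaf;
(4) for every node `t`, `G[χ(t) ∩ L] ∈ H`. -/
def IsTreeHDecompOn (H : GraphClass) (G : SimpleGraph V) (W : Set V) (D : PreDecomp V) : Prop :=
  (∀ t, D.χ t ⊆ W) ∧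
  D.L ⊆ W ∧
  (∀ v ∈ W, ((D.T.graph).induce {t | v ∈ D.χ t}).Connected) ∧
  (∀ u v : V, u ∈ W → v ∈ W → G.Adj u v → ∃ t, u ∈ D.χ t ∧ v ∈ D.χ t) ∧
  (∀ v ∈ D.L, ∃! t, v ∈ D.χ t) ∧
  (∀ v ∈ D.L, ∀ t, v ∈ D.χ t → D.T.IsLeaf t) ∧
  (∀ t, H (G.induce (D.χ t ∩ D.L)))

/-- `D` is a tree `H`-decomposition of `G`. -/
def IsTreeHDecomp (H : GraphClass) (G : SimpleGraph V) (D : PreDecomp V) : Prop :=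
  IsTreeHDecompOn H G Set.univ D

/-- The width of `(T,χ,L)`: `max(0, max_t |χ(t) \ L| - 1)`. -/
noncomputable def PreDecomp.width (D : PreDecomp V) : ℕ :=
  sSup (Set.range fun t => (D.χ t \ D.L).ncard) - 1

/-- The `H`-treewidth of `G`: the minimum width of a tree `H`-decomposition of `G`. -/
noncomputable def htw (H : GraphClass) (G : SimpleGraph V) : ℕ :=
  sInf {n : ℕ | ∃ D : PreDecomp V, IsTreeHDecomp H G D ∧ D.width = n}

/-- The class of all graphs. -/
def TrivialClass : GraphClass := fun {_} _ => True

/-- A standard tree decomposition: a tree `H`-decomposition with `L = ∅`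
(the choice of `H` is then irrelevant). -/
def IsTreeDecomp (G : SimpleGraph V) (D : PreDecomp V) : Prop :=
  IsTreeHDecomp TrivialClass G D ∧ D.L = ∅

/-- The treewidth of `G`. -/
noncomputable def tw (G : SimpleGraph V) : ℕ :=
  sInf {n : ℕ | ∃ D : PreDecomp V, IsTreeDecomp G D ∧ D.width = n}

/-! If `(C,S)` is an `(H,ℓ)`-separation weakly covering `Z`, then `S ∪ (X' ∩ C)` separates `Z`
from `X'`, so `|X' ∩ C| ≥ λ(Z,X') - ℓ = ℓ + 1` and hence `|X' \ C| ≤ ℓ`. Replacing `X'` by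
`S ∪ (X' \ C)`, of size at most `2ℓ`, still leaves a graph in `H`: the part of it inside `C` lies
in `G[C]`, the part outside `C` lies in `G - X`, and no edge joins the two parts because every
neighbour of `C` outside `C` was deleted with `S`. -/

variable {G : SimpleGraph V}

theorem SimpleGraph.Walk.exists_mem_support_of_neighbor_mem {C S : Set V}
    (hN : ∀ v ∈ C, ∀ u : V, G.Adj v u → u ∉ C → u ∈ S) {x y : V} (p : G.Walk x y)
    (hx : x ∈ C) (hy : y ∉ C) : ∃ v ∈ p.support, v ∈ S := by
  obtain ⟨d, hd, hfst, hsnd⟩ := p.exists_boundary_dart C hx hy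
  exact ⟨d.snd, p.dart_snd_mem_support_of_mem_darts hd, hN _ hfst _ d.adj hsnd⟩

theorem lam_le_ncard {X Y P : Set V} (h : IsSeparator G X Y P) : lam G X Y ≤ P.ncard :=
  Nat.sInf_le ⟨P, h, rfl⟩

theorem isSeparator_union_inter {C S Z : Set V}
    (hN : ∀ v ∈ C, ∀ u : V, G.Adj v u → u ∉ C → u ∈ S) (hZ : Z ⊆ C ∪ S) (Y : Set V) :
    IsSeparator G Z Y (S ∪ (Y ∩ C)) := by
  intro z y hz hy p
  rcases hZ hz with hzC | hzS
  · by_cases hyC : y ∈ C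
    · exact ⟨y, p.end_mem_support, Or.inr ⟨hy, hyC⟩⟩
    · obtain ⟨v, hv, hvS⟩ := p.exists_mem_support_of_neighbor_mem hN hzC hyC
      exact ⟨v, hv, Or.inl hvS⟩
  · exact ⟨z, p.start_mem_support, Or.inl hzS⟩

theorem lam_le_add_ncard_inter {H : GraphClass} {ℓ : ℕ} {C S Z : Set V}
    (hCS : IsHSeparation H G ℓ C S) (hZ : WeaklyCovers C S Z) (Y : Set V) :
    lam G Z Y ≤ ℓ + (Y ∩ C).ncard :=
  calc lam G Z Y ≤ (S ∪ (Y ∩ C)).ncard := lam_le_ncard (isSeparator_union_inter hCS.2.2.2 hZ Y)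
    _ ≤ S.ncard + (Y ∩ C).ncard := Set.ncard_union_le _ _
    _ ≤ ℓ + (Y ∩ C).ncard := Nat.add_le_add_right hCS.2.2.1 _

theorem Hereditary.induce_of_subset {H : GraphClass} (hher : Hereditary H) {A B : Set V}
    (hB : H (G.induce B)) (hAB : A ⊆ B) : H (G.induce A) :=
  hher _ _ hB (SimpleGraph.induceHomOfLE G hAB)

open Classical in
noncomputable def SimpleGraph.induceEmbeddingSum (G : SimpleGraph V) (A C : Set V)
    (hno : ∀ u ∈ A ∩ C, ∀ v ∈ A \ C, ¬ G.Adj u v) :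
    G.induce A ↪g G.induce (A ∩ C) ⊕g G.induce (A \ C) where
  toFun v := if h : (v : V) ∈ C then .inl ⟨v, v.2, h⟩ else .inr ⟨v, v.2, h⟩
  inj' u v huv := by
    dsimp only at huv
    split_ifs at huv <;> injection huv with h <;> exact Subtype.ext (Subtype.mk_eq_mk.mp h)
  map_rel_iff' {u v} := by
    change (_ ⊕g _).Adj (dite _ _ _) (dite _ _ _) ↔ G.Adj u v
    split_ifs with hu hv hv
    · exact Iff.rfl
    · exact iff_of_false (by simp) (hno u ⟨u.2, hu⟩ v ⟨v.2, hv⟩)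
    · exact iff_of_false (by simp) fun h => hno v ⟨v.2, hv⟩ u ⟨u.2, hu⟩ h.symm
    · exact Iff.rfl

theorem UnionClosed.induce_of_inter_of_diff {H : GraphClass} (hher : Hereditary H)
    (hun : UnionClosed H) {A C : Set V} (hno : ∀ u ∈ A ∩ C, ∀ v ∈ A \ C, ¬ G.Adj u v)
    (hAC : H (G.induce (A ∩ C))) (hAC' : H (G.induce (A \ C))) : H (G.induce A) :=
  hher _ _ (hun _ _ hAC hAC') (G.induceEmbeddingSum A C hno)

theorem IsDeletionSet.mono {H : GraphClass} (hher : Hereditary H) {X Y : Set V}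
    (hX : IsDeletionSet H G X) (hXY : X ⊆ Y) : IsDeletionSet H G Y :=
  hher.induce_of_subset hX (Set.compl_subset_compl.mpr hXY)

theorem IsDeletionSet.union_diff_of_isHSeparation {H : GraphClass} (hher : Hereditary H)
    (hun : UnionClosed H) {ℓ : ℕ} {X C S : Set V} (hX : IsDeletionSet H G X)
    (hCS : IsHSeparation H G ℓ C S) : IsDeletionSet H G (S ∪ (X \ C)) := by
  obtain ⟨-, hC, -, hN⟩ := hCS
  refine hun.induce_of_inter_of_diff hher ?_ (hher.induce_of_subset hC Set.inter_subset_right)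
    (hher.induce_of_subset hX fun v hv hvX => hv.1 (Or.inr ⟨hvX, hv.2⟩))
  exact fun u hu v hv huv => hv.1 (Or.inl (hN u hu.2 v huv hv.2))

theorem redundant_of_large_flow_general {V : Type} (H : GraphClass)
    (hher : Hereditary H) (hun : UnionClosed H)
    (G : SimpleGraph V) (X : Set V) (hX : IsDeletionSet H G X)
    (ℓ : ℕ) (Z : Set V) (hZ : WeaklySeparable H G ℓ Z)
    (X' : Set V) (hX'card : X'.ncard = 2 * ℓ + 1)
    (hlam : lam G Z X' = 2 * ℓ + 1) :
    Redundant H G X X' := by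
  obtain ⟨C, S, hCS, hcov⟩ := hZ
  refine ⟨S ∪ (X' \ C), ?_, ?_⟩
  · have hflow := lam_le_add_ncard_inter hCS hcov X'
    have hsplit := Set.ncard_inter_add_ncard_sdiff_eq_ncard X' C
      (Set.finite_of_ncard_ne_zero (by omega))
    have hunion := Set.ncard_union_le S (X' \ C)
    have hS := hCS.2.2.1
    omega
  · refine (hX.union_diff_of_isHSeparation hher hun hCS).mono hher ?_
    rintro v (hvS | ⟨hvX, hvC⟩)
    · exact Or.inr (Or.inl hvS)
    · by_cases hvX' : v ∈ X'
      · exact Or.inr (Or.inr ⟨hvX', hvC⟩)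
      · exact Or.inl ⟨hvX, hvX'⟩

/-- if `X` is an `H`-deletion set, `Z` is weakly `(H,ℓ)`-separable
and `X' ⊆ X` has size `2ℓ+1` with `λ_G(Z,X') = 2ℓ+1`, then `X'` is redundant in `X`. -/
theorem redundant_of_large_flow {V : Type} [Fintype V] (H : GraphClass)
    (hher : Hereditary H) (hun : UnionClosed H)
    (G : SimpleGraph V) (X : Set V) (hX : IsDeletionSet H G X)
    (ℓ : ℕ) (Z : Set V) (hZ : WeaklySeparable H G ℓ Z)
    (X' : Set V) (hX'sub : X' ⊆ X) (hX'card : X'.ncard = 2 * ℓ + 1)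
    (hlam : lam G Z X' = 2 * ℓ + 1) :
    Redundant H G X X' :=
  redundant_of_large_flow_general H hher hun G X hX ℓ Z hZ X' hX'card hlam
end

section
/- Let H be a hereditary and union-closed class of graphs, let G be a graph, let X be an H-deletion set in G, and let C, S ⊆ V(G) be disjoint sets with G[C] ∈ H and N_G(C) ⊆ S. Then (X \ C) ∪ S is an H-deletion set in G. -/
variable {V : Type}

/-! Outside `(X \ C) ∪ S`, a vertex of `C` has all its neighbours in `C`, so
`G - ((X \ C) ∪ S)` is the disjoint union of an induced subgraph of `G[C]` and an induced
subgraph of `G - X`; both lie in `H`, hence so does their union. -/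

namespace SimpleGraph

variable {α : Type*} (G : SimpleGraph α) {s t : Set α}

def induceUnionIsoSum [DecidablePred (· ∈ s)] (hst : Disjoint s t)
    (hG : ∀ v ∈ s, ∀ w ∈ t, ¬G.Adj v w) :
    G.induce (s ∪ t) ≃g G.induce s ⊕g G.induce t where
  toEquiv := Equiv.Set.union hst
  map_rel_iff' {a b} := by
    rcases a with ⟨a, ha | ha⟩ <;> rcases b with ⟨b, hb | hb⟩ <;>
      simp only [Equiv.Set.union_apply_left hst, Equiv.Set.union_apply_right hst, ha, hb,
        sum_adj_inl, sum_adj_inr, comap_adj, Function.Embedding.subtype_apply,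
        not_adj_sum_inl_inr, false_iff]
    · exact hG a ha b hb
    · simpa [sum_adj] using fun h => hG b hb a ha h.symm

end SimpleGraph

section GraphClass

variable {H : GraphClass} {V : Type} {G : SimpleGraph V} {s t : Set V}

theorem Hereditary.induce_mono (hher : Hereditary H) (hs : H (G.induce s)) (hts : t ⊆ s) :
    H (G.induce t) :=
  hher _ _ hs (G.induceHomOfLE hts)

theorem Hereditary.induce_union (hher : Hereditary H) (hun : UnionClosed H)
    (hst : Disjoint s t) (hG : ∀ v ∈ s, ∀ w ∈ t, ¬G.Adj v w)
    (hs : H (G.induce s)) (ht : H (G.induce t)) : H (G.induce (s ∪ t)) := by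
  classical
  exact hher _ _ (hun _ _ hs ht) (G.induceUnionIsoSum hst hG).toEmbedding

end GraphClass

theorem deletionSet_exchange_general {V : Type} (H : GraphClass)
    (hher : Hereditary H) (hun : UnionClosed H)
    (G : SimpleGraph V) (X : Set V) (hX : IsDeletionSet H G X)
    (C S : Set V) (hC : H (G.induce C))
    (hN : ∀ v ∈ C, ∀ u : V, G.Adj v u → u ∉ C → u ∈ S) :
    IsDeletionSet H G ((X \ C) ∪ S) := by
  set A := ((X \ C) ∪ S)ᶜ
  have hAC : A ∩ C ⊆ C := Set.inter_subset_right
  have hAX : A \ C ⊆ Xᶜ := fun v hv hvX => hv.1 (Or.inl ⟨hvX, hv.2⟩)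
  have hsep : ∀ v ∈ A ∩ C, ∀ w ∈ A \ C, ¬G.Adj v w :=
    fun v hv w hw hvw => hw.1 (Or.inr (hN v hv.2 w hvw hw.2))
  have hA : H (G.induce (A ∩ C ∪ A \ C)) := hher.induce_union hun
    Set.disjoint_sdiff_inter.symm hsep (hher.induce_mono hC hAC) (hher.induce_mono hX hAX)
  rwa [Set.inter_union_sdiff] at hA

/-- if `X` is an `H`-deletion set and `C, S` are disjoint with
`G[C] ∈ H` and `N_G(C) ⊆ S`, then `(X \ C) ∪ S` is an `H`-deletion set. -/
theorem deletionSet_exchange {V : Type} [Fintype V] (H : GraphClass)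
    (hher : Hereditary H) (hun : UnionClosed H)
    (G : SimpleGraph V) (X : Set V) (hX : IsDeletionSet H G X)
    (C S : Set V) (hdisj : Disjoint C S) (hC : H (G.induce C))
    (hN : ∀ v ∈ C, ∀ u : V, G.Adj v u → u ∉ C → u ∈ S) :
    IsDeletionSet H G ((X \ C) ∪ S) :=
  deletionSet_exchange_general H hher hun G X hX C S hC hN
end

section
/- Let H be a class of graphs containing the 0-vertex graph, let G be a graph and let (A,B) be a separation of G. Let (T_A,χ_A,L_A) be a tree H-decomposition of G[A] with root r_A and let (T_B,χ_B,L_B) be a tree H-decomposition of G[B] with root r_B. Let S_A, S_B ⊆ V(G) satisfy A∩B ⊆ S_A ⊆ χ_A(r_A), S_A ∩ L_A = ∅, A∩B ⊆ S_B ⊆ χ_B(r_B), and S_B ∩ L_B = ∅. Form (T,χ,L) by taking the disjoint union of T_A and T_B, adding a new root node r whose children are r_A and r_B, letting χ agree with χ_A on T_A and with χ_B on T_B, setting χ(r) = S_A ∪ S_B, and setting L = L_A ∪ L_B. Then (T,χ,L) is a tree H-decomposition of G, and its width is at most the maximum of the width of (T_A,χ_A,L_A), the width of (T_B,χ_B,L_B),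 and |S_A ∪ S_B| − 1. -/
variable {V : Type}

open scoped Classical in
/-- The parent function of the merge of two rooted trees: a new root `none`
whose children are the two old roots. -/
noncomputable def mergeParent (TA TB : RTree) :
    Option (TA.ι ⊕ TB.ι) → Option (TA.ι ⊕ TB.ι) := fun t =>
  match t with
  | none => none
  | some (Sum.inl a) => if a = TA.root then none else some (Sum.inl (TA.parent a))
  | some (Sum.inr b) => if b = TB.root then none else some (Sum.inr (TB.parent b))

/-- The merge of two rooted trees: take their disjoint union and insert a new
root node whose children are the two old roots. -/
noncomputable def RTree.merge (TA TB : RTree) : RTree where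
  ι := Option (TA.ι ⊕ TB.ι)
  fin := by letI := TA.fin; letI := TB.fin; infer_instance
  root := none
  parent := mergeParent TA TB
  parent_root := rfl
  wf := by
    have keyA : ∀ (n : ℕ) (a : TA.ι), TA.parent^[n] a = TA.root →
        ∃ m : ℕ, (mergeParent TA TB)^[m] (some (Sum.inl a)) = none := by
      intro n
      induction n with
      | zero =>
        intro a ha
        simp only [Function.iterate_zero, id_eq] at ha
        exact ⟨1, by simp [mergeParent, ha]⟩
      | succ n ih =>
        intro a ha
        by_cases h : a = TA.root
        · exact ⟨1, by simp [mergeParent, h]⟩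
        · obtain ⟨m, hm⟩ := ih (TA.parent a)
            (by rw [← Function.iterate_succ_apply]; exact ha)
          refine ⟨m + 1, ?_⟩
          rw [Function.iterate_succ_apply]
          have hstep : mergeParent TA TB (some (Sum.inl a))
              = some (Sum.inl (TA.parent a)) := by simp [mergeParent, h]
          rw [hstep]; exact hm
    have keyB : ∀ (n : ℕ) (b : TB.ι), TB.parent^[n] b = TB.root →
        ∃ m : ℕ, (mergeParent TA TB)^[m] (some (Sum.inr b)) = none := by
      intro n
      induction n with
      | zero =>
        intro b hb
        simp only [Function.iterate_zero, id_eq] at hb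
        exact ⟨1, by simp [mergeParent, hb]⟩
      | succ n ih =>
        intro b hb
        by_cases h : b = TB.root
        · exact ⟨1, by simp [mergeParent, h]⟩
        · obtain ⟨m, hm⟩ := ih (TB.parent b)
            (by rw [← Function.iterate_succ_apply]; exact hb)
          refine ⟨m + 1, ?_⟩
          rw [Function.iterate_succ_apply]
          have hstep : mergeParent TA TB (some (Sum.inr b))
              = some (Sum.inr (TB.parent b)) := by simp [mergeParent, h]
          rw [hstep]; exact hm
    intro t
    match t with
    | none => exact ⟨0, rfl⟩
    | some (Sum.inl a) => obtain ⟨n, hn⟩ := TA.wf a; exact keyA n a hn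
    | some (Sum.inr b) => obtain ⟨n, hn⟩ := TB.wf b; exact keyB n b hn

/-- The merge of two candidate tree `H`-decompositions along a root bag `R`:
take the disjoint union of the two trees, add a new root `r` whose children are
the two old roots, give `r` the bag `R`, keep all other bags, and take the
union of the two sets `L`. -/
noncomputable def mergeDecomp {V : Type} (DA DB : PreDecomp V) (R : Set V) :
    PreDecomp V where
  T := DA.T.merge DB.T
  χ := fun t =>
    match t with
    | none => R
    | some (Sum.inl a) => DA.χ a
    | some (Sum.inr b) => DB.χ b
  L := DA.L ∪ DB.L

/-! The new root bag `S_A ∪ S_B` avoids `L_A ∪ L_B`, and `L_A` avoids `B` since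
`L_A ∩ B ⊆ A ∩ B ⊆ S_A`; so every bag of the merge keeps its intersection with `L`, and
the width and the `H`-conditions are inherited. A vertex outside `S_A ∪ S_B` lies on one
side only, so its bags form a connected subtree of `T_A` or `T_B`. A vertex of `S_A ∪ S_B`
that lies in `A` is in `S_A ⊆ χ_A(r_A)` (again because `A ∩ B ⊆ S_A`), so its subtree of
`T_A` reaches the new root through `r_A`, and likewise on the `B` side. -/

namespace SimpleGraph

variable {W W' : Type} {G : SimpleGraph W} {G' : SimpleGraph W'}

lemma Reachable.induce_map (φ : G →g G') {s : Set W} {t : Set W'} (hst : Set.MapsTo φ s t)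
    {x y : W} {hx : x ∈ s} {hy : y ∈ s} (h : (G.induce s).Reachable ⟨x, hx⟩ ⟨y, hy⟩) :
    (G'.induce t).Reachable ⟨φ x, hst hx⟩ ⟨φ y, hst hy⟩ :=
  h.map (induceHom φ hst)

end SimpleGraph

namespace RTree

variable (TA TB : RTree)

lemma merge_parent_inl {a : TA.ι} (ha : a ≠ TA.root) :
    (TA.merge TB).parent (some (.inl a)) = some (.inl (TA.parent a)) := by
  simp [merge, mergeParent, ha]

lemma merge_parent_inr {b : TB.ι} (hb : b ≠ TB.root) :
    (TA.merge TB).parent (some (.inr b)) = some (.inr (TB.parent b)) := by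
  simp [merge, mergeParent, hb]

lemma merge_adj_root_inl : (TA.merge TB).graph.Adj (some (.inl TA.root)) none :=
  ⟨Option.some_ne_none _, Or.inl (by simp [merge, mergeParent])⟩

lemma merge_adj_root_inr : (TA.merge TB).graph.Adj (some (.inr TB.root)) none :=
  ⟨Option.some_ne_none _, Or.inl (by simp [merge, mergeParent])⟩

def mergeInlHom : TA.graph →g (TA.merge TB).graph where
  toFun a := some (.inl a)
  map_rel' := by
    rintro a a' ⟨hne, h⟩
    refine ⟨fun h' => hne (Sum.inl_injective (Option.some_injective _ h')), ?_⟩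
    rcases h with h | h
    · have ha : a ≠ TA.root := by rintro rfl; exact hne (TA.parent_root ▸ h)
      exact .inl (by rw [merge_parent_inl TA TB ha, h])
    · have ha' : a' ≠ TA.root := by rintro rfl; exact hne (TA.parent_root ▸ h).symm
      exact .inr (by rw [merge_parent_inl TA TB ha', h])

def mergeInrHom : TB.graph →g (TA.merge TB).graph where
  toFun b := some (.inr b)
  map_rel' := by
    rintro b b' ⟨hne, h⟩
    refine ⟨fun h' => hne (Sum.inr_injective (Option.some_injective _ h')), ?_⟩
    rcases h with h | h
    · have hb : b ≠ TB.root := by rintro rfl; exact hne (TB.parent_root ▸ h)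
      exact .inl (by rw [merge_parent_inr TA TB hb, h])
    · have hb' : b' ≠ TB.root := by rintro rfl; exact hne (TB.parent_root ▸ h).symm
      exact .inr (by rw [merge_parent_inr TA TB hb', h])

variable {TA TB}

lemma IsLeaf.merge_inl {a : TA.ι} (ha : TA.IsLeaf a) : (TA.merge TB).IsLeaf (some (.inl a)) := by
  rintro (_ | a' | b') h
  · simp [merge, mergeParent] at h
  · by_cases hr : a' = TA.root
    · simp [merge, mergeParent, hr] at h
    · rw [merge_parent_inl TA TB hr] at h
      rw [ha a' (Sum.inl_injective (Option.some_injective _ h))]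
  · by_cases hr : b' = TB.root <;> simp [merge, mergeParent, hr] at h

lemma IsLeaf.merge_inr {b : TB.ι} (hb : TB.IsLeaf b) : (TA.merge TB).IsLeaf (some (.inr b)) := by
  rintro (_ | a' | b') h
  · simp [merge, mergeParent] at h
  · by_cases hr : a' = TA.root <;> simp [merge, mergeParent, hr] at h
  · by_cases hr : b' = TB.root
    · simp [merge, mergeParent, hr] at h
    · rw [merge_parent_inr TA TB hr] at h
      rw [hb b' (Sum.inr_injective (Option.some_injective _ h))]

end RTree

lemma PreDecomp.width_le_iff (D : PreDecomp V) {w : ℕ} :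
    D.width ≤ w ↔ ∀ t, (D.χ t \ D.L).ncard ≤ w + 1 := by
  let := D.T.fin
  have : Nonempty D.T.ι := ⟨D.T.root⟩
  rw [PreDecomp.width, Nat.sub_le_iff_le_add,
    csSup_le_iff (Set.finite_range _).bddAbove (Set.range_nonempty _), Set.forall_mem_range]

lemma IsSeparation.mem_side_of_adj {G : SimpleGraph V} {A B : Set V} (hsep : IsSeparation G A B)
    {u v : V} (huv : G.Adj u v) : (u ∈ A ∧ v ∈ A) ∨ (u ∈ B ∧ v ∈ B) := by
  have hu : u ∈ A ∪ B := hsep.1 ▸ Set.mem_univ u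
  have hv : v ∈ A ∪ B := hsep.1 ▸ Set.mem_univ v
  have huv' := hsep.2 u
  have hvu := hsep.2 v
  simp only [Set.mem_union, Set.mem_sdiff] at hu hv huv' hvu
  have := huv.symm
  tauto

section mergeDecomp

variable {H : GraphClass} {G : SimpleGraph V} {A B R : Set V} {DA DB : PreDecomp V}

lemma mergeDecomp_connected (hcover : A ∪ B = Set.univ) (hDA : IsTreeHDecompOn H G A DA)
    (hDB : IsTreeHDecompOn H G B DB) (hAB : A ∩ B ⊆ R) (hRA : R ∩ A ⊆ DA.χ DA.T.root)
    (hRB : R ∩ B ⊆ DB.χ DB.T.root) (v : V) :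
    ((mergeDecomp DA DB R).T.graph.induce {t | v ∈ (mergeDecomp DA DB R).χ t}).Connected := by
  obtain ⟨hχA, -, hconnA, -⟩ := hDA
  obtain ⟨hχB, -, hconnB, -⟩ := hDB
  let Gv := (DA.T.merge DB.T).graph.induce {t | v ∈ (mergeDecomp DA DB R).χ t}
  have liftA {a a' : DA.T.ι} (ha : v ∈ DA.χ a) (ha' : v ∈ DA.χ a') :
      Gv.Reachable ⟨some (.inl a), ha⟩ ⟨some (.inl a'), ha'⟩ :=
    ((hconnA v (hχA a ha)).preconnected ⟨a, ha⟩ ⟨a', ha'⟩).induce_map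
      (RTree.mergeInlHom DA.T DB.T) fun _ h => h
  have liftB {b b' : DB.T.ι} (hb : v ∈ DB.χ b) (hb' : v ∈ DB.χ b') :
      Gv.Reachable ⟨some (.inr b), hb⟩ ⟨some (.inr b'), hb'⟩ :=
    ((hconnB v (hχB b hb)).preconnected ⟨b, hb⟩ ⟨b', hb'⟩).induce_map
      (RTree.mergeInrHom DA.T DB.T) fun _ h => h
  change Gv.Connected
  rw [SimpleGraph.connected_iff_exists_forall_reachable]
  by_cases hvR : v ∈ R
  · refine ⟨⟨none, hvR⟩, ?_⟩
    rintro ⟨_ | a | b, hv⟩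
    · rfl
    · have hroot := hRA ⟨hvR, hχA a hv⟩
      have hadj : Gv.Adj ⟨_, hroot⟩ ⟨none, hvR⟩  := RTree.merge_adj_root_inl DA.T DB.T
      exact ((liftA hv hroot).trans hadj.reachable).symm
    · have hroot := hRB ⟨hvR, hχB b hv⟩
      have hadj : Gv.Adj ⟨_, hroot⟩ ⟨none, hvR⟩  := RTree.merge_adj_root_inr DA.T DB.T
      exact ((liftB hv hroot).trans hadj.reachable).symm
  · have hv : v ∈ A ∪ B := hcover ▸ Set.mem_univ v
    rcases hv with hvA | hvB
    · obtain ⟨⟨a₀, ha₀⟩⟩ := (hconnA v hvA).nonempty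
      refine ⟨⟨some (.inl a₀), ha₀⟩, ?_⟩
      rintro ⟨_ | a | b, hv⟩
      · exact absurd hv hvR
      · exact liftA ha₀ hv
      · exact absurd (hAB ⟨hvA, hχB b hv⟩) hvR
    · obtain ⟨⟨b₀, hb₀⟩⟩ := (hconnB v hvB).nonempty
      refine ⟨⟨some (.inr b₀), hb₀⟩, ?_⟩
      rintro ⟨_ | a | b, hv⟩
      · exact absurd hv hvR
      · exact absurd (hAB ⟨hχA a hv, hvB⟩) hvR
      · exact liftB hb₀ hv

lemma mergeDecomp_exists_bag_of_adj (hsep : IsSeparation G A B) (hDA : IsTreeHDecompOn H G A DA)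
    (hDB : IsTreeHDecompOn H G B DB) {u v : V} (huv : G.Adj u v) :
    ∃ t, u ∈ (mergeDecomp DA DB R).χ t ∧ v ∈ (mergeDecomp DA DB R).χ t := by
  obtain ⟨-, -, -, hedgeA, -⟩ := hDA
  obtain ⟨-, -, -, hedgeB, -⟩ := hDB
  rcases hsep.mem_side_of_adj huv with ⟨hu, hv⟩ | ⟨hu, hv⟩
  · obtain ⟨a, ha⟩ := hedgeA u v hu hv huv
    exact ⟨some (.inl a), ha⟩
  · obtain ⟨b, hb⟩ := hedgeB u v hu hv huv
    exact ⟨some (.inr b), hb⟩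

lemma mergeDecomp_mem_bag_of_mem_left (hRL : Disjoint R (DA.L ∪ DB.L))
    (hBL : ∀ b, Disjoint (DB.χ b) DA.L) {v : V} (hv : v ∈ DA.L) {t : (DA.T.merge DB.T).ι}
    (ht : v ∈ (mergeDecomp DA DB R).χ t) : ∃ a, t = some (.inl a) ∧ v ∈ DA.χ a := by
  rcases t with _ | a | b
  · exact absurd (.inl hv) (Set.disjoint_left.mp hRL ht)
  · exact ⟨a, rfl, ht⟩
  · exact absurd hv (Set.disjoint_left.mp (hBL b) ht)

lemma mergeDecomp_mem_bag_of_mem_right (hRL : Disjoint R (DA.L ∪ DB.L))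
    (hAL : ∀ a, Disjoint (DA.χ a) DB.L) {v : V} (hv : v ∈ DB.L) {t : (DA.T.merge DB.T).ι}
    (ht : v ∈ (mergeDecomp DA DB R).χ t) : ∃ b, t = some (.inr b) ∧ v ∈ DB.χ b := by
  rcases t with _ | a | b
  · exact absurd (.inr hv) (Set.disjoint_left.mp hRL ht)
  · exact absurd hv (Set.disjoint_left.mp (hAL a) ht)
  · exact ⟨b, rfl, ht⟩

lemma mergeDecomp_existsUnique_bag (hDA : IsTreeHDecompOn H G A DA)
    (hDB : IsTreeHDecompOn H G B DB) (hRL : Disjoint R (DA.L ∪ DB.L))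
    (hAL : ∀ a, Disjoint (DA.χ a) DB.L) (hBL : ∀ b, Disjoint (DB.χ b) DA.L) :
    ∀ v ∈ (mergeDecomp DA DB R).L, ∃! t, v ∈ (mergeDecomp DA DB R).χ t := by
  obtain ⟨-, -, -, -, huniqA, -⟩ := hDA
  obtain ⟨-, -, -, -, huniqB, -⟩ := hDB
  rintro v (hv | hv)
  · obtain ⟨a, ha, huniq⟩ := huniqA v hv
    refine ⟨some (.inl a), ha, fun t ht => ?_⟩
    obtain ⟨a', rfl, ha'⟩ := mergeDecomp_mem_bag_of_mem_left hRL hBL hv ht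
    rw [huniq a' ha']
  · obtain ⟨b, hb, huniq⟩ := huniqB v hv
    refine ⟨some (.inr b), hb, fun t ht => ?_⟩
    obtain ⟨b', rfl, hb'⟩ := mergeDecomp_mem_bag_of_mem_right hRL hAL hv ht
    rw [huniq b' hb']

lemma mergeDecomp_isLeaf (hDA : IsTreeHDecompOn H G A DA)
    (hDB : IsTreeHDecompOn H G B DB) (hRL : Disjoint R (DA.L ∪ DB.L))
    (hAL : ∀ a, Disjoint (DA.χ a) DB.L) (hBL : ∀ b, Disjoint (DB.χ b) DA.L) :
    ∀ v ∈ (mergeDecomp DA DB R).L, ∀ t, v ∈ (mergeDecomp DA DB R).χ t →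
      (mergeDecomp DA DB R).T.IsLeaf t := by
  obtain ⟨-, -, -, -, -, hleafA, -⟩ := hDA
  obtain ⟨-, -, -, -, -, hleafB, -⟩ := hDB
  rintro v (hv | hv) t ht
  · obtain ⟨a, rfl, ha⟩ := mergeDecomp_mem_bag_of_mem_left hRL hBL hv ht
    exact (hleafA v hv a ha).merge_inl
  · obtain ⟨b, rfl, hb⟩ := mergeDecomp_mem_bag_of_mem_right hRL hAL hv ht
    exact (hleafB v hv b hb).merge_inr

lemma mergeDecomp_mem_class (hnull : ContainsNullGraph H) (hDA : IsTreeHDecompOn H G A DA)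
    (hDB : IsTreeHDecompOn H G B DB) (hRL : Disjoint R (DA.L ∪ DB.L))
    (hAL : ∀ a, Disjoint (DA.χ a) DB.L) (hBL : ∀ b, Disjoint (DB.χ b) DA.L) :
    ∀ t, H (G.induce ((mergeDecomp DA DB R).χ t ∩ (mergeDecomp DA DB R).L)) := by
  obtain ⟨-, -, -, -, -, -, hclassA⟩ := hDA
  obtain ⟨-, -, -, -, -, -, hclassB⟩ := hDB
  rintro (_ | a | b)
  · change H (G.induce (R ∩ (DA.L ∪ DB.L)))
    rw [hRL.inter_eq]
    exact hnull _ (Set.isEmpty_coe_sort.mpr rfl) _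
  · change H (G.induce (DA.χ a ∩ (DA.L ∪ DB.L)))
    rw [Set.inter_union_distrib_left, (hAL a).inter_eq, Set.union_empty]
    exact hclassA a
  · change H (G.induce (DB.χ b ∩ (DA.L ∪ DB.L)))
    rw [Set.inter_union_distrib_left, (hBL b).inter_eq, Set.empty_union]
    exact hclassB b

lemma mergeDecomp_width_le (hRL : Disjoint R (DA.L ∪ DB.L))
    (hAL : ∀ a, Disjoint (DA.χ a) DB.L) (hBL : ∀ b, Disjoint (DB.χ b) DA.L) :
    (mergeDecomp DA DB R).width ≤ max (max DA.width DB.width) (R.ncard - 1) := by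
  rw [PreDecomp.width_le_iff]
  rintro (_ | a | b)
  · change (R \ (DA.L ∪ DB.L)).ncard ≤ _
    rw [hRL.sdiff_eq_left]
    omega
  · change (DA.χ a \ (DA.L ∪ DB.L)).ncard ≤ _
    rw [← Set.sdiff_sdiff, ((hAL a).mono_left Set.sdiff_subset).sdiff_eq_left]
    have := (DA.width_le_iff.mp le_rfl) a
    omega
  · change (DB.χ b \ (DA.L ∪ DB.L)).ncard ≤ _
    rw [Set.union_comm, ← Set.sdiff_sdiff, ((hBL b).mono_left Set.sdiff_subset).sdiff_eq_left]
    have := (DB.width_le_iff.mp le_rfl) b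
    omega

theorem mergeDecomp_isTreeHDecomp (hnull : ContainsNullGraph H) (hsep : IsSeparation G A B)
    (hDA : IsTreeHDecompOn H G A DA) (hDB : IsTreeHDecompOn H G B DB) (hAB : A ∩ B ⊆ R)
    (hRA : R ∩ A ⊆ DA.χ DA.T.root) (hRB : R ∩ B ⊆ DB.χ DB.T.root)
    (hRL : Disjoint R (DA.L ∪ DB.L)) :
    IsTreeHDecomp H G (mergeDecomp DA DB R) ∧
      (mergeDecomp DA DB R).width ≤ max (max DA.width DB.width) (R.ncard - 1) := by
  have hLB : Disjoint DA.L B := Set.disjoint_left.mpr fun v hvL hvB =>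
    Set.disjoint_left.mp hRL (hAB ⟨hDA.2.1 hvL, hvB⟩) (.inl hvL)
  have hLA : Disjoint DB.L A := Set.disjoint_left.mpr fun v hvL hvA =>
    Set.disjoint_left.mp hRL (hAB ⟨hvA, hDB.2.1 hvL⟩) (.inr hvL)
  have hAL a : Disjoint (DA.χ a) DB.L := hLA.symm.mono_left (hDA.1 a)
  have hBL b : Disjoint (DB.χ b) DA.L := hLB.symm.mono_left (hDB.1 b)
  refine ⟨⟨fun _ => Set.subset_univ _, Set.subset_univ _, fun v _ => ?_, fun u v _ _ huv => ?_,
    mergeDecomp_existsUnique_bag hDA hDB hRL hAL hBL, mergeDecomp_isLeaf hDA hDB hRL hAL hBL,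
    mergeDecomp_mem_class hnull hDA hDB hRL hAL hBL⟩, mergeDecomp_width_le hRL hAL hBL⟩
  · exact mergeDecomp_connected hsep.1 hDA hDB hAB hRA hRB v
  · exact mergeDecomp_exists_bag_of_adj hsep hDA hDB huv

end mergeDecomp

theorem merge_isTreeHDecomp_general {V : Type} (H : GraphClass)
    (hnull : ContainsNullGraph H) (G : SimpleGraph V)
    (A B : Set V) (hsep : IsSeparation G A B)
    (DA DB : PreDecomp V)
    (hDA : IsTreeHDecompOn H G A DA) (hDB : IsTreeHDecompOn H G B DB)
    (SA SB : Set V)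
    (hSA1 : A ∩ B ⊆ SA) (hSA2 : SA ⊆ DA.χ DA.T.root) (hSA3 : SA ∩ DA.L = ∅)
    (hSB1 : A ∩ B ⊆ SB) (hSB2 : SB ⊆ DB.χ DB.T.root) (hSB3 : SB ∩ DB.L = ∅) :
    IsTreeHDecomp H G (mergeDecomp DA DB (SA ∪ SB)) ∧
      (mergeDecomp DA DB (SA ∪ SB)).width ≤
        max (max DA.width DB.width) ((SA ∪ SB).ncard - 1) := by
  have hSA : SA ⊆ A := hSA2.trans (hDA.1 _)
  have hSB : SB ⊆ B := hSB2.trans (hDB.1 _)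
  have hRA : (SA ∪ SB) ∩ A ⊆ DA.χ DA.T.root := by
    rintro v ⟨hv | hv, hvA⟩
    exacts [hSA2 hv, hSA2 (hSA1 ⟨hvA, hSB hv⟩)]
  have hRB : (SA ∪ SB) ∩ B ⊆ DB.χ DB.T.root := by
    rintro v ⟨hv | hv, hvB⟩
    exacts [hSB2 (hSB1 ⟨hSA hv, hvB⟩), hSB2 hv]
  have hdA : Disjoint SA DA.L := Set.disjoint_iff_inter_eq_empty.mpr hSA3
  have hdB : Disjoint SB DB.L := Set.disjoint_iff_inter_eq_empty.mpr hSB3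
  have hRL : Disjoint (SA ∪ SB) (DA.L ∪ DB.L) := by
    refine Set.disjoint_union_left.mpr
      ⟨Set.disjoint_union_right.mpr ⟨hdA, ?_⟩, Set.disjoint_union_right.mpr ⟨?_, hdB⟩⟩
    · exact Set.disjoint_left.mpr fun v hv hvL =>
        Set.disjoint_left.mp hdB (hSB1 ⟨hSA hv, hDB.2.1 hvL⟩) hvL
    · exact Set.disjoint_left.mpr fun v hv hvL =>
        Set.disjoint_left.mp hdA (hSA1 ⟨hDA.2.1 hvL, hSB hv⟩) hvL
  exact mergeDecomp_isTreeHDecomp hnull hsep hDA hDB (hSA1.trans Set.subset_union_left)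
    hRA hRB hRL

/-- let `(A,B)` be a separation of `G`, let `D_A = (T_A,χ_A,L_A)`
and `D_B = (T_B,χ_B,L_B)` be tree `H`-decompositions of `G[A]` and `G[B]` with
roots `r_A`, `r_B`, and let `S_A, S_B` satisfy `A∩B ⊆ S_A ⊆ χ_A(r_A)`,
`S_A ∩ L_A = ∅`, `A∩B ⊆ S_B ⊆ χ_B(r_B)`, `S_B ∩ L_B = ∅`. If `H` contains the
graph with no vertices, then the merge of `D_A` and `D_B` along the new root
bag `S_A ∪ S_B` is a tree `H`-decomposition of `G`, of width at most the
maximum of the widths of `D_A` and `D_B` and `|S_A ∪ S_B| - 1`. -/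
theorem merge_isTreeHDecomp {V : Type} [Fintype V] (H : GraphClass)
    (hnull : ContainsNullGraph H) (G : SimpleGraph V)
    (A B : Set V) (hsep : IsSeparation G A B)
    (DA DB : PreDecomp V)
    (hDA : IsTreeHDecompOn H G A DA) (hDB : IsTreeHDecompOn H G B DB)
    (SA SB : Set V)
    (hSA1 : A ∩ B ⊆ SA) (hSA2 : SA ⊆ DA.χ DA.T.root) (hSA3 : SA ∩ DA.L = ∅)
    (hSB1 : A ∩ B ⊆ SB) (hSB2 : SB ⊆ DB.χ DB.T.root) (hSB3 : SB ∩ DB.L = ∅) :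
    IsTreeHDecomp H G (mergeDecomp DA DB (SA ∪ SB)) ∧
      (mergeDecomp DA DB (SA ∪ SB)).width ≤
        max (max DA.width DB.width) ((SA ∪ SB).ncard - 1) :=
  merge_isTreeHDecomp_general H hnull G A B hsep DA DB hDA hDB SA SB hSA1 hSA2 hSA3 hSB1 hSB2 hSB3
end
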